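/- arXiv:math/0604392 — 2 statements merged into one kernel-verified Lean document; each statement's English description precedes it below -/
import Mathlib

section
/- All 18 expressions listed in Section 2 of the paper (one for each of the blocks $000,203,100,111,001,102,220,022,202,200,020,201,010,002,011,110,101,222$), evaluated with $p_1=0.47$, $p_2=p_3=p_4=0.53/3$, and the Table 1 scores, are simultaneously strictly positive; in particular their minimum exceeds $0.0001$. -/
/-- All 18 expressions from Section 2 of the paper (one for each block
`000, 203, 100, 111, 001, 102, 220, 022, 202, 200, 020, 201, 010, 002, 011, 110, 101, 222`),
evaluated with `p₁ = 0.47`, `p₂ = p₃ = p₄ = 0.53/3` and the Table 1 scores, are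
simultaneously strictly positive; in particular each of them (hence their minimum)
exceeds `0.0001`.  (Here `(302)` is scored as `(203)` by the symmetry `2 ↔ 3`.) -/
theorem all_eighteen_expressions_pos :
    let p1 : ℝ := 0.47
    let p2 : ℝ := 0.53 / 3
    let s222 : ℝ := 0; let s220 : ℝ := 0.163; let s202 : ℝ := 0.295
    let s203 : ℝ := 0.339; let s022 : ℝ := 0.354; let s200 : ℝ := 0.404
    let s201 : ℝ := 0.493; let s020 : ℝ := 0.498; let s002 : ℝ := 0.570
    let s000 : ℝ := 0.664; let s001 : ℝ := 0.827; let s010 : ℝ := 0.920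
    let s102 : ℝ := 1.008; let s100 : ℝ := 1.157; let s011 : ℝ := 1.173
    let s101 : ℝ := 1.456; let s110 : ℝ := 1.555; let s111 : ℝ := 1.997
    let E : List ℝ :=
      [ p1 * (s002 + 1 + s100 + s010) + 3 * p2 * (-1 + s200 + s020 + s002 / 3)
          + 2 * p2 * s000 - 3 * s000,                                               -- 000
        p1 * (s002 + 0.5 * (s002 + s200)) + p2 * (-1 + s020 + s200 + s002)
          + p2 * (-1 + s020 + s002 + (s002 + s200) / 2) - 2 * s203,                 -- 203
        p1 * (2 + s022 + s110 + s100) + 3 * p2 * (s010 - 1 + s000) / 2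
          + 3 * p2 * s000 + 2 * p2 * s100 + p2 * s102 - 3 * s100,                   -- 100
        p1 * 4 + 3 * p2 * (-1 + s011 * 2) / 2 - s111 + (1 - p1) * (s110 - s111),    -- 111
        p1 * (1 + s010 + s101 + s011) + 3 * p2 * (-1 + s000 + s201 + s000)
          - 3 * s001 + (1 - p1) * (s000 - s001),                                    -- 001
        p1 * (2 + s100) + 3 * p2 * (-1 + s010 + s002) / 2
          + p2 * (s002 + s100 + s002) - 2 * s102,                                   -- 102
        p1 * (s020 + (s200 + s220) / 2) + p2 * (-1 + s022)
          + p2 * (-1 + s022 + s020 + s220 + s200) - 2 * s220,                       -- 220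
        p1 * (1 + s002) + 3 * p2 * (-1 + s002) + 2 * p2 * s002 - 2 * s022,          -- 022
        p1 * (s002 + (s200 + s002) / 2) + p2 * (-1 + s020)
          + p2 * (-1 + s020 + s002 + s002 + s200) - 2 * s202,                       -- 202
        p1 * (s000 + s000 + s200) + p2 * (-1 + s020 + s220 + s202)
          + p2 * (-1 + s020 + s000 * 3 + 2 * s200) - 3 * s200,                      -- 200
        p1 * (1 + s202 + 1.5 * s000 + 0.5 * s020) + p2 * (-1 + s002 + s220 + s022)
          + 2 * p2 * (-1 + s002 + 1.5 * s000 + 0.5 * s020) - 3 * s020,              -- 020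
        p1 * (s001 * 2) + p2 * (-1 + s020 + s200 - 1 + s020 + 2 * s001 + s200)
          - 2 * s201 + (1 - p1) * (s200 - s201),                                    -- 201
        p1 * (1 + s102 + s110 + s010) + 3 * p2 * (-1 + s001 + s000)
          + p2 * (s000 * 2 + s010) - 3 * s010,                                      -- 010
        p1 * (1 + s022 + s102 + s000) + p2 * (-1 + s000 + s202 + s022)
          + 2 * p2 * (-1 + s000 + s203 + s000) - 3 * s002,                          -- 002
        p1 * (1 + s110 + s111) + 3 * p2 * (-1 + s001 + s001) - 2 * s011
          + (1 - p1) * (s010 - s011),                                               -- 011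
        p1 * (3 + s110) + 3 * p2 * (-1 + s011 + s010) / 2
          + p2 * (2 * s100 + s110) - 2 * s110,                                      -- 110
        p1 * (2 + s102 + s111) + 3 * p2 * (-1 + s010 + s001 + s001 + s100) / 2
          - 2 * s101 + (1 - p1) * (s100 - s101),                                    -- 101
        p1 * s022 + p2 * (-2 + 3 * s022) ]                                          -- 222
    (∀ e ∈ E, 0 < e) ∧ ∀ e ∈ E, 0.0001 < e := by
  refine ⟨?_, ?_⟩ <;> (intro e he; fin_cases he <;> norm_num)
end

section
/- Suppose $(W_t)_{t\ge 0}$ is a continuous-time Markov jump process on a countable state space with bounded jump rates, taking values in $\mathbb{N}\cup\{\infty\}$, whose generator $L$ satisfies $LW(\eta)\ge c>0$ for all states $\eta$ with $W(\eta)<\infty$ in a given class. If moreover all jumps change $W$ by a bounded amount and the total jump rate is bounded, then there exists $\epsilon>0$ such that $1-(1-\epsilon)^{W_t}$ is a submartingale. -/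
/-!
Write `x = 1 - ε`. A jump from weight `a` to weight `b`, with `|b - a| ≤ M`, changes
`1 - x^W` by `x^a (1 - x^(b-a))`, and a second-order expansion in `ε` bounds this from below by
`x^a (ε (b - a) - 2 (M ε)^2)`. Summing against the rates, the generator of `1 - x^W` is at least
`x^a (ε LW - 2 (M ε)^2 R) ≥ x^a ε (c - 2 M^2 ε R)`, which is nonnegative once `ε ≤ c / (2 M^2 R)`.
-/

/-- `1 - (1-ε)^w` for `w ∈ ℕ ∪ {∞}`, with the convention `(1-ε)^∞ = 0`. -/
noncomputable def expWeight (ε : ℝ) (w : ℕ∞) : ℝ :=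
  if w = ⊤ then 1 else 1 - (1 - ε) ^ (WithTop.untopD 0 w)

/-- The real value of a weight in `ℕ ∪ {∞}` (with junk value `0` at `∞`). -/
noncomputable def weightReal (w : ℕ∞) : ℝ := (WithTop.untopD 0 w : ℕ)

open Real

@[simp]
lemma expWeight_natCast (ε : ℝ) (n : ℕ) : expWeight ε n = 1 - (1 - ε) ^ n := rfl

@[simp]
lemma weightReal_natCast (n : ℕ) : weightReal n = n := rfl

lemma expWeight_mem_Icc {ε : ℝ} (h₀ : 0 ≤ ε) (h₁ : ε ≤ 1) (w : ℕ∞) :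
    expWeight ε w ∈ Set.Icc 0 1 := by
  induction w using ENat.recTopCoe with
  | top => simp [expWeight]
  | coe n =>
    have hx : 0 ≤ (1 - ε) ^ n := pow_nonneg (by linarith) n
    have hx' : (1 - ε) ^ n ≤ 1 := pow_le_one₀ (by linarith) (by linarith)
    simp only [expWeight_natCast, Set.mem_Icc]
    constructor <;> linarith

lemma one_sub_pow_le {ε : ℝ} {d : ℕ} (h₀ : 0 ≤ ε) (h₁ : ε ≤ 1) (hd : d * ε ≤ 1) :
    (1 - ε) ^ d ≤ 1 - d * ε + (d * ε) ^ 2 := by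
  have hdε : |-(d * ε)| ≤ 1 := by rwa [abs_neg, abs_of_nonneg (by positivity)]
  have hexp := (abs_le.1 (abs_exp_sub_one_sub_id_le hdε)).2
  calc (1 - ε) ^ d ≤ exp (-ε) ^ d :=
        pow_le_pow_left₀ (by linarith) (by linarith [add_one_le_exp (-ε)]) d
    _ = exp (-(d * ε)) := by rw [← exp_nat_mul]; ring_nf
    _ ≤ 1 - d * ε + (d * ε) ^ 2 := by linarith

lemma one_le_one_sub_pow_mul {ε : ℝ} (h₀ : 0 ≤ ε) (h₂ : ε ≤ 2) {e : ℕ} (he : 2 * (e * ε) ≤ 1) :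
    1 ≤ (1 - ε) ^ e * (1 + e * ε + 2 * (e * ε) ^ 2) := by
  have hbern : 1 - e * ε ≤ (1 - ε) ^ e := by
    simpa [sub_eq_add_neg] using one_add_mul_le_pow (a := -ε) (by linarith) e
  have ht : 0 ≤ (e : ℝ) * ε := by positivity
  -- `(1 - t) (1 + t + 2 t^2) = 1 + t^2 (1 - 2 t)`
  calc (1 : ℝ) ≤ (1 - e * ε) * (1 + e * ε + 2 * (e * ε) ^ 2) := by
        nlinarith [mul_nonneg (sq_nonneg ((e : ℝ) * ε)) (by linarith : 0 ≤ 1 - 2 * (e * ε))]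
    _ ≤ (1 - ε) ^ e * (1 + e * ε + 2 * (e * ε) ^ 2) :=
        mul_le_mul_of_nonneg_right hbern (by positivity)

lemma le_one_sub_pow_sub_one_sub_pow {ε : ℝ} {M a b : ℕ} (h₀ : 0 ≤ ε) (h₁ : ε ≤ 1)
    (hε : 2 * (M * ε) ≤ 1) (hab : b ≤ a + M) (hba : a ≤ b + M) :
    (1 - ε) ^ a * (ε * (b - a) - 2 * (M * ε) ^ 2) ≤ (1 - ε) ^ a - (1 - ε) ^ b := by
  have hx : 0 ≤ 1 - ε := by linarith
  rcases le_total a b with h | h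
  · obtain ⟨d, rfl⟩ := Nat.exists_eq_add_of_le h
    have hdM : (d : ℝ) ≤ M := by exact_mod_cast (by omega : d ≤ M)
    have hd : (d * ε) ^ 2 ≤ (M * ε) ^ 2 := by gcongr
    calc (1 - ε) ^ a * (ε * ((a + d : ℕ) - a) - 2 * (M * ε) ^ 2)
        ≤ (1 - ε) ^ a * (1 - (1 - d * ε + (d * ε) ^ 2)) := by
          refine mul_le_mul_of_nonneg_left ?_ (pow_nonneg hx a); push_cast; nlinarith
      _ ≤ (1 - ε) ^ a * (1 - (1 - ε) ^ d) := by
          gcongr; exact one_sub_pow_le h₀ h₁ (by nlinarith)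
      _ = (1 - ε) ^ a - (1 - ε) ^ (a + d) := by ring
  · obtain ⟨e, rfl⟩ := Nat.exists_eq_add_of_le h
    have heM : (e : ℝ) ≤ M := by exact_mod_cast (by omega : e ≤ M)
    have he : (e * ε) ^ 2 ≤ (M * ε) ^ 2 := by gcongr
    have key : (1 - ε) ^ b ≤ (1 - ε) ^ (b + e) * (1 + e * ε + 2 * (M * ε) ^ 2) :=
      calc (1 - ε) ^ b = (1 - ε) ^ b * 1 := (mul_one _).symm
        _ ≤ (1 - ε) ^ b * ((1 - ε) ^ e * (1 + e * ε + 2 * (e * ε) ^ 2)) := by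
          gcongr; exact one_le_one_sub_pow_mul h₀ (by linarith) (by nlinarith)
        _ ≤ (1 - ε) ^ (b + e) * (1 + e * ε + 2 * (M * ε) ^ 2) := by
          rw [pow_add, mul_assoc]; gcongr
    push_cast
    linarith

lemma abs_weightReal_sub_le {M a : ℕ} {w : ℕ∞} (hwa : w ≤ a + M) (haw : (a : ℕ∞) ≤ w + M) :
    |weightReal w - weightReal a| ≤ M := by
  lift w to ℕ using ne_top_of_le_ne_top (by simp) hwa
  norm_cast at hwa haw
  have hwa' : (w : ℝ) ≤ a + M := by exact_mod_cast hwa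
  have haw' : (a : ℝ) ≤ w + M := by exact_mod_cast haw
  simp only [weightReal_natCast, abs_sub_le_iff]
  constructor <;> linarith

lemma le_expWeight_sub_expWeight {ε : ℝ} {M a : ℕ} {w : ℕ∞} (h₀ : 0 ≤ ε) (h₁ : ε ≤ 1)
    (hε : 2 * (M * ε) ≤ 1) (hwa : w ≤ a + M) (haw : (a : ℕ∞) ≤ w + M) :
    (1 - ε) ^ a * (ε * (weightReal w - weightReal a) - 2 * (M * ε) ^ 2) ≤
      expWeight ε w - expWeight ε a := by
  lift w to ℕ using ne_top_of_le_ne_top (by simp) hwa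
  norm_cast at hwa haw
  simpa using le_one_sub_pow_sub_one_sub_pow h₀ h₁ hε hwa haw

lemma le_tsum_mul_expWeight_sub {ι : Type*} {p : ι → ℝ} (hp : ∀ i, 0 ≤ p i) (hps : Summable p)
    {w : ι → ℕ∞} {M a : ℕ} (hw : ∀ i, 0 < p i → w i ≤ a + M ∧ (a : ℕ∞) ≤ w i + M)
    {ε : ℝ} (h₀ : 0 ≤ ε) (h₁ : ε ≤ 1) (hε : 2 * (M * ε) ≤ 1) :
    (1 - ε) ^ a * (ε * ∑' i, p i * (weightReal (w i) - weightReal a) -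
        2 * (M * ε) ^ 2 * ∑' i, p i) ≤
      ∑' i, p i * (expWeight ε (w i) - expWeight ε a) := by
  have hdrift : Summable fun i ↦ p i * (weightReal (w i) - weightReal a) :=
    (hps.mul_right (M : ℝ)).of_norm_bounded fun i ↦ by
      rcases (hp i).eq_or_lt with h | h
      · simp [← h]
      rw [Real.norm_eq_abs, abs_mul, abs_of_pos h]
      exact mul_le_mul_of_nonneg_left (abs_weightReal_sub_le (hw i h).1 (hw i h).2) h.le
  have hexp : Summable fun i ↦ p i * (expWeight ε (w i) - expWeight ε a) :=
    hps.of_norm_bounded fun i ↦ by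
      have hwi := expWeight_mem_Icc h₀ h₁ (w i)
      have ha := expWeight_mem_Icc h₀ h₁ a
      rw [norm_mul, Real.norm_of_nonneg (hp i)]
      exact mul_le_of_le_one_right (hp i) (abs_sub_le_of_nonneg_of_le hwi.1 hwi.2 ha.1 ha.2)
  calc (1 - ε) ^ a * (ε * ∑' i, p i * (weightReal (w i) - weightReal a) -
          2 * (M * ε) ^ 2 * ∑' i, p i)
      = ∑' i, (1 - ε) ^ a * (ε * (p i * (weightReal (w i) - weightReal a)) -
          2 * (M * ε) ^ 2 * p i) := by
        rw [tsum_mul_left, (hdrift.mul_left ε).tsum_sub (hps.mul_left _), tsum_mul_left,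
          tsum_mul_left]
    _ ≤ ∑' i, p i * (expWeight ε (w i) - expWeight ε a) := by
        refine ((hdrift.mul_left ε).sub (hps.mul_left _)).mul_left _ |>.tsum_le_tsum
          (fun i ↦ ?_) hexp
        rcases (hp i).eq_or_lt with h | h
        · simp [← h]
        calc (1 - ε) ^ a * (ε * (p i * (weightReal (w i) - weightReal a)) - 2 * (M * ε) ^ 2 * p i)
            = p i * ((1 - ε) ^ a * (ε * (weightReal (w i) - weightReal a) - 2 * (M * ε) ^ 2)) := by
              ring
          _ ≤ p i * (expWeight ε (w i) - expWeight ε a) :=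
              mul_le_mul_of_nonneg_left
                (le_expWeight_sub_expWeight h₀ h₁ hε (hw i h).1 (hw i h).2) h.le

theorem generator_exponential_submartingale_general
    {S : Type*}
    (q : S → S → ℝ) (hq : ∀ η η', 0 ≤ q η η')
    (R : ℝ) (hR : 0 < R)
    (hsummable : ∀ η, Summable (q η))
    (hrate : ∀ η, ∑' η', q η η' ≤ R)
    (W : S → ℕ∞) (M : ℕ) (hM : 1 ≤ M)
    (hjump : ∀ η η', 0 < q η η' → W η' ≤ W η + M ∧ W η ≤ W η' + M)
    (C : Set S) (c : ℝ) (hc : 0 < c)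
    (hdrift : ∀ η ∈ C, W η ≠ ⊤ →
      c ≤ ∑' η', q η η' * (weightReal (W η') - weightReal (W η))) :
    ∃ ε : ℝ, 0 < ε ∧ ε < 1 ∧ ∀ η ∈ C, W η ≠ ⊤ →
      0 ≤ ∑' η', q η η' * (expWeight ε (W η') - expWeight ε (W η)) := by
  have hM₀ : (0 : ℝ) < M := Nat.cast_pos.2 hM
  set ε : ℝ := min (1 / (2 * M)) (c / (2 * M ^ 2 * R))
  have hε₀ : 0 < ε := lt_min (by positivity) (by positivity)
  have hεM : 2 * (M * ε) ≤ 1 := by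
    have : ε * (2 * M) ≤ 1 := (le_div_iff₀ (by positivity)).1 (min_le_left _ _)
    linarith
  have hεc : ε * (2 * M ^ 2 * R) ≤ c := (le_div_iff₀ (by positivity)).1 (min_le_right _ _)
  have hε₁ : ε < 1 := by nlinarith [(Nat.one_le_cast (α := ℝ)).2 hM]
  refine ⟨ε, hε₀, hε₁, fun η hη hfin ↦ ?_⟩
  obtain ⟨a, ha⟩ := ENat.ne_top_iff_exists.1 hfin
  have hgen := le_tsum_mul_expWeight_sub (hq η) (hsummable η) (w := W) (a := a)
    (fun η' h ↦ by rw [ha]; exact hjump η η' h) hε₀.le hε₁.le hεM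
  have hLW := hdrift η hη hfin
  rw [← ha] at hLW ⊢
  refine (mul_nonneg (pow_nonneg (by linarith) a) ?_).trans hgen
  nlinarith [mul_le_mul_of_nonneg_left hLW hε₀.le,
    mul_le_mul_of_nonneg_left (hrate η) (sq_nonneg (M * ε))]

/-- Consider a continuous-time Markov jump process on a countable state space `S` with
jump rates `q`, total jump rate bounded by `R`, and a weight function `W : S → ℕ ∪ {∞}`
whose jumps are bounded by `M` and whose generator drift satisfies `L W ≥ c > 0` on a
class `C` of states with finite weight.  Then there is `ε ∈ (0,1)` such that the
generator applied to `1 - (1-ε)^W` is nonnegative on that class, i.e.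
`1 - (1-ε)^{W_t}` is a submartingale for the process stopped on leaving the class. -/
theorem generator_exponential_submartingale
    {S : Type*} [Countable S]
    (q : S → S → ℝ) (hq : ∀ η η', 0 ≤ q η η')
    (R : ℝ) (hR : 0 < R)
    (hsummable : ∀ η, Summable (q η))
    (hrate : ∀ η, ∑' η', q η η' ≤ R)
    (W : S → ℕ∞) (M : ℕ) (hM : 1 ≤ M)
    (hjump : ∀ η η', 0 < q η η' → W η' ≤ W η + M ∧ W η ≤ W η' + M)
    (C : Set S) (c : ℝ) (hc : 0 < c)
    (hdrift : ∀ η ∈ C, W η ≠ ⊤ →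
      c ≤ ∑' η', q η η' * (weightReal (W η') - weightReal (W η))) :
    ∃ ε : ℝ, 0 < ε ∧ ε < 1 ∧ ∀ η ∈ C, W η ≠ ⊤ →
      0 ≤ ∑' η', q η η' * (expWeight ε (W η') - expWeight ε (W η)) :=
  generator_exponential_submartingale_general q hq R hR hsummable hrate W M hM hjump C c hc hdrift
end
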